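/- Let S be a semigroup and T a subsemigroup with S−T finite. If every element of T is eventually regular in S (some power of it is regular in S), then every element of S has a power lying in T or has two equal powers; consequently if T is eventually regular as a semigroup and additionally every regular element of T is regular in S, then S is eventually regular. -/
import Mathlib


/-- `spow x k` is the power `x^(k+1)` of an element of a semigroup. -/
def spow {S : Type*} [Mul S] (x : S) : ℕ → S
  | 0 => x
  | k + 1 => spow x k * x

lemma spow_add {S : Type*} [Semigroup S] (x : S) (m n : ℕ) :
    spow x (m + n + 1) = spow x m * spow x n := by
  induction n with
  | zero => rfl
  | succ n ih =>
      show spow x (m + n + 1) * x = _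
      rw [ih, spow, mul_assoc]

lemma spow_spow {S : Type*} [Semigroup S] (x : S) (k j : ℕ) :
    spow (spow x k) j = spow x (k + j * (k + 1)) := by
  induction j with
  | zero => simp [spow]
  | succ j ih =>
      show spow (spow x k) j * spow x k = _
      rw [ih, ← spow_add]
      congr 1
      ring

lemma spow_mem {S : Type*} [Semigroup S] (T : Subsemigroup S) {x : S} (hx : x ∈ T) (k : ℕ) :
    spow x k ∈ T := by
  induction k with
  | zero => exact hx
  | succ k ih => exact T.mul_mem ih hx

lemma spow_shift {S : Type*} [Semigroup S] {s : S} {m p : ℕ}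
    (h : spow s m = spow s (m + p)) : ∀ a, m ≤ a → spow s a = spow s (a + p) := by
  intro a ha
  obtain ⟨j, rfl⟩ := Nat.exists_eq_add_of_le ha
  cases j with
  | zero => simpa using h
  | succ j =>
      rw [show m + (j + 1) + p = (m + p) + j + 1 by ring,
        show m + (j + 1) = m + j + 1 by ring, spow_add, spow_add, h]

lemma spow_shift_mul {S : Type*} [Semigroup S] {s : S} {m p : ℕ}
    (h : spow s m = spow s (m + p)) : ∀ t a, m ≤ a → spow s a = spow s (a + t * p) := by
  intro t
  induction t with
  | zero => simp
  | succ t ih =>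
      intro a ha
      have := spow_shift h (a + t * p) (le_trans ha (Nat.le_add_right _ _))
      rw [ih a ha, this]
      congr 1
      ring

/-- From two equal powers, an idempotent (hence regular) power. -/
lemma exists_regular_of_period {S : Type*} [Semigroup S] {s : S} {m k : ℕ}
    (hmk : m < k) (h : spow s m = spow s k) :
    ∃ (n : ℕ) (x : S), spow s n * x * spow s n = spow s n := by
  set p := k - m with hp
  have hp1 : 1 ≤ p := by omega
  have h' : spow s m = spow s (m + p) := by rw [hp]; convert h using 2; omega
  set a := (m + 1) * p - 1 with ha
  have hA : a + 1 = (m + 1) * p := Nat.sub_add_cancel (by nlinarith)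
  have ham : m ≤ a := by nlinarith
  have key : spow s a = spow s (a + (m + 1) * p) := spow_shift_mul h' (m + 1) a ham
  have h2 : a + (m + 1) * p = a + a + 1 := by omega
  rw [h2, spow_add] at key
  refine ⟨a, spow s a, ?_⟩
  rw [← key, ← key]

/-- Let `T` be a subsemigroup of `S` with finite complement. If every element of `T` is
eventually regular in `S`, then every element of `S` has a power lying in `T` or has two
equal powers; consequently, if `T` is eventually regular as a semigroup and every regular
element of `T` is regular in `S`, then `S` is eventually regular. -/
theorem stmt7 {S : Type*} [Semigroup S] (T : Subsemigroup S)
    (hfin : ((T : Set S)ᶜ).Finite) :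
    ((∀ t ∈ T, ∃ (k : ℕ) (x : S), spow t k * x * spow t k = spow t k) →
      ∀ s : S, (∃ k : ℕ, spow s k ∈ T) ∨ ∃ m k : ℕ, m < k ∧ spow s m = spow s k) ∧
    (((∀ t ∈ T, ∃ k : ℕ, ∃ x ∈ (T : Set S), spow t k * x * spow t k = spow t k) ∧
        (∀ t ∈ T, (∃ x ∈ (T : Set S), t * x * t = t) → ∃ x : S, t * x * t = t)) →
      ∀ s : S, ∃ (k : ℕ) (x : S), spow s k * x * spow s k = spow s k) := by
  classical
  have dich : ∀ s : S, (∃ k : ℕ, spow s k ∈ T) ∨ ∃ m k : ℕ, m < k ∧ spow s m = spow s k := by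
    intro s
    by_cases hT : ∃ k : ℕ, spow s k ∈ T
    · exact Or.inl hT
    · push_neg at hT
      right
      haveI := hfin.to_subtype
      obtain ⟨a, b, hab, heq⟩ := Finite.exists_ne_map_eq_of_infinite
        (fun k : ℕ => (⟨spow s k, hT k⟩ : ((T : Set S)ᶜ : Set S)))
      have heq' : spow s a = spow s b := congrArg Subtype.val heq
      rcases lt_or_gt_of_ne hab with h | h
      · exact ⟨a, b, h, heq'⟩
      · exact ⟨b, a, h, heq'.symm⟩
  constructor
  · exact fun _ => dich
  · rintro ⟨h1, h2⟩ s
    rcases dich s with ⟨k, hk⟩ | ⟨m, n, hmn, heq⟩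
    · obtain ⟨j, x, hxT, hx⟩ := h1 _ hk
      obtain ⟨y, hy⟩ := h2 _ (spow_mem T hk j) ⟨x, hxT, hx⟩
      rw [spow_spow] at hy
      exact ⟨k + j * (k + 1), y, hy⟩
    · exact exists_regular_of_period hmn heq
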